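/- The function I₁ = (x h_x − h)²/h_y² is invariant under the prolonged action of the Kundt wave symmetry pseudogroup: if h̃(x, y−C, F⁻¹(ũ)-data) is related to h by h̃ = h/F'² + ((2F'''F' − 3F''²)/(8F'⁴))x with (x,y,u) transformed by (x, y+C, F(u)), then (x h̃_x − h̃)²/h̃_y² = (x h_x − h)²/h_y² at corresponding points. -/

import Mathlib

noncomputable section

/-- Partial derivative on `ℝ³` with coordinates `(x,y,u)`. -/
def pd3 (f : (Fin 3 → ℝ) → ℝ) (i : Fin 3) (p : Fin 3 → ℝ) : ℝ :=
  fderiv ℝ f p (Pi.single i 1)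

/-- Base transformation `(x,y,u) ↦ (x, y + C, F(u))`. -/
def T (F : ℝ → ℝ) (C : ℝ) (q : Fin 3 → ℝ) : Fin 3 → ℝ := ![q 0, q 1 + C, F (q 2)]

lemma line_deriv (f : (Fin 3 → ℝ) → ℝ) (hf : ContDiff ℝ (⊤ : ℕ∞) f) (p v : Fin 3 → ℝ) :
    HasDerivAt (fun t : ℝ => f (p + t • v)) (fderiv ℝ f p v) 0 := by
  have h1 : HasDerivAt (fun t : ℝ => p + t • v) v 0 := by
    simpa using ((hasDerivAt_id (0:ℝ)).smul_const v).const_add p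
  have h2 : HasFDerivAt f (fderiv ℝ f p) ((fun t : ℝ => p + t • v) 0) := by
    simpa using (hf.differentiable (by simp) p).hasFDerivAt
  exact h2.comp_hasDerivAt 0 h1

/-- The function `I₁ = (x h_x − h)²/h_y²` is invariant under the prolonged action of the
Kundt wave symmetry pseudogroup: if `h̃` is related to `h` by
`h̃(x, y+C, F(u)) = h/F'² + ((2F'''F' − 3F''²)/(8F'⁴)) x`, then
`(x h̃_x − h̃)²/h̃_y² = (x h_x − h)²/h_y²` at corresponding points. -/
theorem I1_invariant (F : ℝ → ℝ) (C : ℝ) (hF : ContDiff ℝ (⊤ : ℕ∞) F)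
    (hF' : ∀ u, deriv F u ≠ 0)
    (h htil : (Fin 3 → ℝ) → ℝ) (hh : ContDiff ℝ (⊤ : ℕ∞) h) (hhtil : ContDiff ℝ (⊤ : ℕ∞) htil)
    (hrel : ∀ q : Fin 3 → ℝ,
      htil (T F C q) =
        h q / (deriv F (q 2)) ^ 2 +
          ((2 * deriv (deriv (deriv F)) (q 2) * deriv F (q 2)
              - 3 * (deriv (deriv F) (q 2)) ^ 2) / (8 * (deriv F (q 2)) ^ 4)) * q 0) :
    ∀ q : Fin 3 → ℝ,
      (q 0 * pd3 htil 0 (T F C q) - htil (T F C q)) ^ 2 / (pd3 htil 1 (T F C q)) ^ 2 =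
        (q 0 * pd3 h 0 q - h q) ^ 2 / (pd3 h 1 q) ^ 2 := by
  intro q
  set c : ℝ := deriv F (q 2) with hc
  set K : ℝ := (2 * deriv (deriv (deriv F)) (q 2) * c - 3 * (deriv (deriv F) (q 2)) ^ 2)
      / (8 * c ^ 4) with hK
  have hcne : c ≠ 0 := hF' _
  -- translation identities
  have hT0 : ∀ t : ℝ, T F C q + t • (Pi.single 0 1 : Fin 3 → ℝ) = T F C (q + t • (Pi.single 0 1 : Fin 3 → ℝ)) := by
    intro t; funext i; fin_cases i <;> simp [T, Pi.single_apply] <;> ring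
  have hT1 : ∀ t : ℝ, T F C q + t • (Pi.single 1 1 : Fin 3 → ℝ) = T F C (q + t • (Pi.single 1 1 : Fin 3 → ℝ)) := by
    intro t; funext i; fin_cases i <;> simp [T, Pi.single_apply] <;> ring
  have hq2 : ∀ (t : ℝ) (i : Fin 3), i ≠ 2 → (q + t • (Pi.single i 1 : Fin 3 → ℝ)) 2 = q 2 := by
    intro t i hi; simp [Pi.single_apply, Ne.symm hi]
  have hq00 : ∀ t : ℝ, (q + t • (Pi.single 0 1 : Fin 3 → ℝ)) 0 = q 0 + t := by
    intro t; simp [Pi.single_apply]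
  have hq01 : ∀ t : ℝ, (q + t • (Pi.single 1 1 : Fin 3 → ℝ)) 0 = q 0 := by
    intro t; simp [Pi.single_apply]
  -- derivative in x
  have hd0 : HasDerivAt (fun t : ℝ => htil (T F C q + t • (Pi.single 0 1 : Fin 3 → ℝ)))
      (pd3 htil 0 (T F C q)) 0 := line_deriv htil hhtil _ _
  have hd0' : HasDerivAt (fun t : ℝ => htil (T F C q + t • (Pi.single 0 1 : Fin 3 → ℝ)))
      (pd3 h 0 q / c ^ 2 + K) 0 := by
    have heq : (fun t : ℝ => htil (T F C q + t • (Pi.single 0 1 : Fin 3 → ℝ)))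
        = fun t : ℝ => h (q + t • (Pi.single 0 1 : Fin 3 → ℝ)) / c ^ 2 + K * (q 0 + t) := by
      funext t
      rw [hT0 t, hrel, hq2 t 0 (by decide), hq00 t]
    rw [heq]
    have h1 : HasDerivAt (fun t : ℝ => h (q + t • (Pi.single 0 1 : Fin 3 → ℝ)) / c ^ 2)
        (pd3 h 0 q / c ^ 2) 0 := (line_deriv h hh _ _).div_const _
    have h2 : HasDerivAt (fun t : ℝ => K * (q 0 + t)) K 0 := by
      simpa using (((hasDerivAt_id (0:ℝ)).const_add (q 0)).const_mul K)
    exact h1.add h2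
  have e0 : pd3 htil 0 (T F C q) = pd3 h 0 q / c ^ 2 + K := hd0.unique hd0'
  -- derivative in y
  have hd1 : HasDerivAt (fun t : ℝ => htil (T F C q + t • (Pi.single 1 1 : Fin 3 → ℝ)))
      (pd3 htil 1 (T F C q)) 0 := line_deriv htil hhtil _ _
  have hd1' : HasDerivAt (fun t : ℝ => htil (T F C q + t • (Pi.single 1 1 : Fin 3 → ℝ)))
      (pd3 h 1 q / c ^ 2) 0 := by
    have heq : (fun t : ℝ => htil (T F C q + t • (Pi.single 1 1 : Fin 3 → ℝ)))
        = fun t : ℝ => h (q + t • (Pi.single 1 1 : Fin 3 → ℝ)) / c ^ 2 + K * q 0 := by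
      funext t
      rw [hT1 t, hrel, hq2 t 1 (by decide), hq01 t]
    rw [heq]
    simpa [pd3] using ((line_deriv h hh _ _).div_const (c ^ 2)).add_const (K * q 0)
  have e1 : pd3 htil 1 (T F C q) = pd3 h 1 q / c ^ 2 := hd1.unique hd1'
  rw [e0, e1, hrel]
  have key : q 0 * (pd3 h 0 q / c ^ 2 + K) - (h q / c ^ 2 + K * q 0)
      = (q 0 * pd3 h 0 q - h q) / c ^ 2 := by ring
  rw [key]
  rcases eq_or_ne (pd3 h 1 q) 0 with hb | hb
  · simp [hb]
  · field_simp
end
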